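/- arXiv:2005.04217 — 6 statements merged into one kernel-verified Lean document; each statement's English description precedes it below -/
import Mathlib

section
/- For every natural number n and every integer x, the operator X acts on the basis functions φ_n by (X φ_n(·;α))(x) = −n · φ_{n+1}(x;α) + (n − α) · φ_n(x;α). -/
/-- Pochhammer symbol `(a)_k = a (a+1) ⋯ (a+k-1)`, with `(a)_0 = 1`. -/
noncomputable def poch (a : ℝ) (k : ℕ) : ℝ := ∏ i ∈ Finset.range k, (a + (i : ℝ))

/-- Basis functions `φ_n(x;α) = (-x)_n / (α-x)_n`. -/
noncomputable def phi (α : ℝ) (n : ℕ) (x : ℤ) : ℝ :=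
  poch (-(x : ℝ)) n / poch (α - (x : ℝ)) n

/-- The difference operator `X`: `(X f)(x) = (x-α) f(x) - x f(x-1)`. -/
noncomputable def Xop (α : ℝ) (f : ℤ → ℝ) (x : ℤ) : ℝ :=
  ((x : ℝ) - α) * f x - (x : ℝ) * f (x - 1)

/-!
Both shifts `n ↦ n + 1` and `x ↦ x - 1` multiply `φ_n(x)` by an explicit rational factor,
coming from the two recursions `(a)_{n+1} = (a)_n (a + n) = a (a + 1)_n`:
`φ_{n+1}(x) = φ_n(x) (n - x)/(α - x + n)` and
`x φ_n(x - 1) = φ_n(x) (x - n)(α - x)/(α - x + n)`.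
The claim is then the identity `(x - α) α = -n (n - x) + (n - α)(α - x + n)` after clearing
the denominator `α - x + n`.
-/

lemma poch_succ (a : ℝ) (n : ℕ) : poch a (n + 1) = poch a n * (a + n) :=
  Finset.prod_range_succ _ _

lemma poch_succ' (a : ℝ) (n : ℕ) : poch a (n + 1) = a * poch (a + 1) n := by
  rw [poch, poch, Finset.prod_range_succ', mul_comm, Nat.cast_zero, add_zero]
  congr 1
  refine Finset.prod_congr rfl fun i _ => ?_
  push_cast
  ring

lemma phi_succ (α : ℝ) (n : ℕ) (x : ℤ) :
    phi α (n + 1) x = phi α n x * ((n - x) / (α - x + n)) := by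
  rw [phi, phi, poch_succ, poch_succ, mul_div_mul_comm, neg_add_eq_sub]

lemma intCast_mul_phi_sub_one {α : ℝ} (n : ℕ) {x : ℤ} (hx : α ≠ x) :
    x * phi α n (x - 1) = phi α n x * ((x - n) * (α - x) / (α - x + n)) := by
  have hnum : (x : ℝ) * poch (-((x - 1 : ℤ) : ℝ)) n = poch (-(x : ℝ)) n * (x - n) := by
    rw [show -((x - 1 : ℤ) : ℝ) = -x + 1 by push_cast; ring]
    linear_combination poch_succ' (-(x : ℝ)) n - poch_succ (-(x : ℝ)) n
  have hden : poch (α - ((x - 1 : ℤ) : ℝ)) n = poch (α - x) n * (α - x + n) / (α - x) := by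
    rw [show α - ((x - 1 : ℤ) : ℝ) = α - x + 1 by push_cast; ring,
      eq_div_iff (sub_ne_zero.mpr hx)]
    linear_combination poch_succ (α - x) n - poch_succ' (α - x) n
  rw [phi, phi, ← mul_div_assoc, hnum, hden, div_div_eq_mul_div, mul_assoc, mul_div_mul_comm]

theorem statement0_general (α : ℝ) (hα : ∀ m : ℤ, α ≠ (m : ℝ))
    (n : ℕ) (x : ℤ) :
    Xop α (phi α n) x = -(n : ℝ) * phi α (n + 1) x + ((n : ℝ) - α) * phi α n x := by
  have hd : α - x + n ≠ 0 := by
    have := hα (x - n)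
    push_cast at this
    contrapose! this
    linarith
  rw [Xop, intCast_mul_phi_sub_one n (hα x), phi_succ]
  field_simp
  ring

theorem statement0 (N : ℕ) (hN : 0 < N) (α : ℝ) (hα : ∀ m : ℤ, α ≠ (m : ℝ))
    (n : ℕ) (x : ℤ) :
    Xop α (phi α n) x = -(n : ℝ) * phi α (n + 1) x + ((n : ℝ) - α) * phi α n x :=
  statement0_general α hα n x
end

section
/- For every integer n with 0 ≤ n ≤ N, the function of a real variable x defined by the formula for U_n(x;α,β,N) (which is well defined for all sufficiently large real x) tends to 1 as x → +∞. -/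
/-- The rational function of Hahn type `U_n(x;α,β,N)`, regarded as a function
of a real variable `x` (well defined wherever the denominators `(α-x)_k` are
nonzero, in particular for all `x > α`). -/
noncomputable def Ureal (α β : ℝ) (N n : ℕ) (x : ℝ) : ℝ :=
  ((-1 : ℝ) ^ n * poch (-(N : ℝ)) n / poch (β + 1) n) *
    ∑ k ∈ Finset.range (n + 1),
      poch (-x) k * poch (-(n : ℝ)) k * poch (β + (n : ℝ) - (N : ℝ)) k /
        ((Nat.factorial k : ℝ) * poch (-(N : ℝ)) k * poch (α - x) k)

open Polynomial Finset Filter Topology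

section CommRing

variable {R : Type*} [CommRing R]

theorem descPochhammer_smeval_eq_eval (r : R) (k : ℕ) :
    (descPochhammer ℤ k).smeval r = (descPochhammer R k).eval r := by
  rw [← descPochhammer_map (algebraMap ℤ R), eval_map_algebraMap, aeval_eq_smeval]

theorem ascPochhammer_eval_add (a b : R) (n : ℕ) :
    (ascPochhammer R n).eval (a + b) = ∑ k ∈ range (n + 1),
      n.choose k * ((ascPochhammer R k).eval a * (ascPochhammer R (n - k)).eval b) := by
  have h := Ring.descPochhammer_smeval_add n (Commute.all (-a) (-b))
  simp only [descPochhammer_smeval_eq_eval, ← neg_add] at h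
  rw [← neg_neg (a + b), ascPochhammer_eval_neg_eq_descPochhammer, h, mul_sum,
    Nat.sum_antidiagonal_eq_sum_range_succ (fun i j => (-1) ^ n * (n.choose i *
      ((descPochhammer R i).eval (-a) * (descPochhammer R j).eval (-b))))]
  refine sum_congr rfl fun k hk => ?_
  have hkn : k + (n - k) = n := Nat.add_sub_of_le (Nat.lt_succ_iff.mp (mem_range.mp hk))
  rw [← neg_neg a, ← neg_neg b, ascPochhammer_eval_neg_eq_descPochhammer,
    ascPochhammer_eval_neg_eq_descPochhammer, neg_neg, neg_neg]
  nth_rw 1 [← hkn]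
  rw [pow_add]
  ring

theorem ascPochhammer_add_eval (a : R) (m k : ℕ) :
    (ascPochhammer R (m + k)).eval a =
      (ascPochhammer R m).eval a * (ascPochhammer R k).eval (a + m) := by
  rw [← ascPochhammer_mul, eval_mul, eval_comp]
  simp

theorem ascPochhammer_eval_neg (c : R) (m : ℕ) :
    (ascPochhammer R m).eval (-c) = (-1) ^ m * (ascPochhammer R m).eval (c - m + 1) := by
  rw [ascPochhammer_eval_neg_eq_descPochhammer, descPochhammer_eval_eq_ascPochhammer]

theorem ascPochhammer_eval_neg_natCast (n k : ℕ) :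
    (ascPochhammer R k).eval (-(n : R)) = (-1) ^ k * (k.factorial * n.choose k) := by
  rw [ascPochhammer_eval_neg_eq_descPochhammer, descPochhammer_eval_eq_descFactorial,
    Nat.descFactorial_eq_factorial_mul_choose, Nat.cast_mul]

end CommRing

section Field

variable {K : Type*} [Field K] [CharZero K]

theorem ascPochhammer_eval_neg_natCast_ne_zero {N k : ℕ} (hk : k ≤ N) :
    (ascPochhammer K k).eval (-(N : K)) ≠ 0 := by
  rw [Ne, ascPochhammer_eval_eq_zero_iff, neg_neg]
  rintro ⟨j, hj, hjN⟩
  exact absurd (Nat.cast_injective hjN) (by omega)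

/-- The terminating Gauss sum `₂F₁(-n, b; -N; 1) = (-N - b)_n / (-N)_n`. -/
theorem chu_vandermonde (b : K) {n N : ℕ} (hn : n ≤ N) :
    ∑ k ∈ range (n + 1), (ascPochhammer K k).eval (-(n : K)) * (ascPochhammer K k).eval b /
        (k.factorial * (ascPochhammer K k).eval (-(N : K))) =
      (ascPochhammer K n).eval (-(N : K) - b) / (ascPochhammer K n).eval (-(N : K)) := by
  rw [eq_div_iff (ascPochhammer_eval_neg_natCast_ne_zero hn), sum_mul]
  calc _ = ∑ k ∈ range (n + 1), (-1) ^ n * (n.choose k * ((ascPochhammer K k).eval b *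
        (ascPochhammer K (n - k)).eval ((N : K) - n + 1))) := by
        refine sum_congr rfl fun k hk => ?_
        -- `(-N)ₙ / (-N)ₖ = (-N + k)ₙ₋ₖ = (-1)ⁿ⁻ᵏ (N - n + 1)ₙ₋ₖ` turns the sum into a Vandermonde
        -- convolution.
        have hkn : k ≤ n := Nat.lt_succ_iff.mp (mem_range.mp hk)
        have hsplit := ascPochhammer_add_eval (-(N : K)) k (n - k)
        rw [Nat.add_sub_of_le hkn, show -(N : K) + k = -((N : K) - k) by ring,
          ascPochhammer_eval_neg ((N : K) - k), Nat.cast_sub hkn,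
          show (N : K) - k - (n - k) + 1 = N - n + 1 by ring] at hsplit
        have hNk := ascPochhammer_eval_neg_natCast_ne_zero (K := K) (hkn.trans hn)
        have hfac : (k.factorial : K) ≠ 0 := Nat.cast_ne_zero.mpr k.factorial_ne_zero
        rw [hsplit, ascPochhammer_eval_neg_natCast]
        field_simp
        rw [← Nat.add_sub_of_le hkn, pow_add, Nat.add_sub_cancel_left]
        ring
    _ = (ascPochhammer K n).eval (-(N : K) - b) := by
        rw [← mul_sum, ← ascPochhammer_eval_add, show -(N : K) - b = -(b + N) by ring,
          ascPochhammer_eval_neg, show b + (N : K) - n + 1 = b + (N - n + 1) by ring]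

end Field

theorem poch_eq_eval (a : ℝ) (k : ℕ) : poch a k = (ascPochhammer ℝ k).eval a := by
  induction k with
  | zero => simp [poch]
  | succ k ih => rw [poch, prod_range_succ, ← poch, ih, ascPochhammer_succ_eval]

theorem poch_ne_zero {a : ℝ} (ha : ∀ j : ℕ, a ≠ -j) (n : ℕ) : poch a n ≠ 0 := by
  rw [poch_eq_eval, Ne, ascPochhammer_eval_eq_zero_iff]
  rintro ⟨j, -, hj⟩
  exact ha j (by linarith)

theorem tendsto_sub_div_sub_atTop (a b : ℝ) :
    Tendsto (fun x : ℝ => (a - x) / (b - x)) atTop (𝓝 1) := by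
  have hden : Tendsto (fun x : ℝ => x - b) atTop atTop :=
    tendsto_atTop_add_const_right _ _ tendsto_id
  have h := (tendsto_const_nhds (x := b - a)).div_atTop hden
  rw [← add_zero (1 : ℝ)]
  refine (tendsto_const_nhds.add h).congr' ?_
  filter_upwards [eventually_gt_atTop b] with x hx
  field_simp [(sub_pos.mpr hx).ne', (sub_neg.mpr hx).ne]
  ring

theorem tendsto_poch_sub_div_poch_sub (a b : ℝ) (k : ℕ) :
    Tendsto (fun x : ℝ => poch (a - x) k / poch (b - x) k) atTop (𝓝 1) := by
  simp only [poch, ← prod_div_distrib]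
  rw [← prod_const_one (s := range k)]
  refine tendsto_finsetProd _ fun i _ => ?_
  simpa only [sub_add_eq_add_sub] using tendsto_sub_div_sub_atTop (a + i) (b + i)

theorem tendsto_Ureal (α β : ℝ) (N n : ℕ) :
    Tendsto (Ureal α β N n) atTop (𝓝 (((-1 : ℝ) ^ n * poch (-(N : ℝ)) n / poch (β + 1) n) *
      ∑ k ∈ range (n + 1), poch (-(n : ℝ)) k * poch (β + n - N) k /
        (k.factorial * poch (-(N : ℝ)) k))) := by
  have h := (tendsto_finsetSum (range (n + 1)) fun k _ =>
    (tendsto_poch_sub_div_poch_sub 0 α k).const_mul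
      (poch (-(n : ℝ)) k * poch (β + n - N) k / (k.factorial * poch (-(N : ℝ)) k))).const_mul
    ((-1 : ℝ) ^ n * poch (-(N : ℝ)) n / poch (β + 1) n)
  simp only [mul_one, zero_sub] at h
  refine h.congr fun x => ?_
  simp only [Ureal, div_eq_mul_inv, mul_inv, mul_sum]
  refine sum_congr rfl fun k _ => ?_
  ring

theorem hahn_limit_eq_one {n N : ℕ} (β : ℝ) (hβ : poch (β + 1) n ≠ 0) (hn : n ≤ N) :
    ((-1 : ℝ) ^ n * poch (-(N : ℝ)) n / poch (β + 1) n) *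
      ∑ k ∈ range (n + 1), poch (-(n : ℝ)) k * poch (β + n - N) k /
        (k.factorial * poch (-(N : ℝ)) k) = 1 := by
  have hN := ascPochhammer_eval_neg_natCast_ne_zero (K := ℝ) hn
  simp only [poch_eq_eval] at hβ ⊢
  rw [chu_vandermonde _ hn, show -(N : ℝ) - (β + n - N) = -(β + n) by ring,
    ascPochhammer_eval_neg (β + n), show β + n - n + 1 = β + 1 by ring]
  field_simp
  rw [← pow_mul, pow_mul', neg_one_sq, one_pow]

theorem statement5_general (N : ℕ) (α β : ℝ)
    (hβ : ∀ m : ℤ, β ≠ (m : ℝ))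
    (n : ℕ) (hn : n ≤ N) :
    Filter.Tendsto (fun x : ℝ => Ureal α β N n x) Filter.atTop (nhds 1) := by
  have hpoch : poch (β + 1) n ≠ 0 :=
    poch_ne_zero (fun j h => hβ (-j - 1) (by push_cast; linarith)) n
  simpa only [hahn_limit_eq_one β hpoch hn] using tendsto_Ureal α β N n

theorem statement5 (N : ℕ) (hN : 0 < N) (α β : ℝ)
    (hα : ∀ m : ℤ, α ≠ (m : ℝ)) (hβ : ∀ m : ℤ, β ≠ (m : ℝ))
    (n : ℕ) (hn : n ≤ N) :
    Filter.Tendsto (fun x : ℝ => Ureal α β N n x) Filter.atTop (nhds 1) :=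
  statement5_general N α β hβ n hn
end

section
/- The operators X and Z satisfy the commutation relation [Z, X] = Z² + Z: for every function f : ℤ → ℝ and every integer x, (Z(X f))(x) − (X(Z f))(x) = (Z(Z f))(x) + (Z f)(x). -/
/-- The difference operator `Z`: `(Z f)(x) = -f(x) + (x/(x-α)) f(x-1)`. -/
noncomputable def Zop (α : ℝ) (f : ℤ → ℝ) (x : ℤ) : ℝ :=
  -f x + ((x : ℝ) / ((x : ℝ) - α)) * f (x - 1)

theorem Zop_Xop_sub_Xop_Zop {α : ℝ} {x : ℤ} (hx : (x : ℝ) - α ≠ 0)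
    (hx₁ : ((x - 1 : ℤ) : ℝ) - α ≠ 0) (f : ℤ → ℝ) :
    Zop α (Xop α f) x - Xop α (Zop α f) x = Zop α (Zop α f) x + Zop α f x := by
  simp only [Zop, Xop]
  push_cast at hx₁ ⊢
  field_simp
  ring

theorem statement14 (α : ℝ) (hα : ∀ m : ℤ, α ≠ (m : ℝ)) (f : ℤ → ℝ) (x : ℤ) :
    Zop α (Xop α f) x - Xop α (Zop α f) x = Zop α (Zop α f) x + Zop α f x :=
  Zop_Xop_sub_Xop_Zop (sub_ne_zero.mpr (hα x).symm) (sub_ne_zero.mpr (hα (x - 1)).symm) f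
end

section
/- The operators X, Y, Z satisfy the quadratic relation [X, Y] = ξ₁(X² + Z²) + {X, Z} + {Y, Z} + ξ₂ X + ξ₃ Z + Y + ξ₀ I: for every function f : ℤ → ℝ and every integer x, (X(Y f))(x) − (Y(X f))(x) = ξ₁((X(X f))(x) + (Z(Z f))(x)) + (X(Z f))(x) + (Z(X f))(x) + (Y(Z f))(x) + (Z(Y f))(x) + ξ₂ (X f)(x) + ξ₃ (Z f)(x) + (Y f)(x) + ξ₀ f(x), where ξ₀ = α(α − β), ξ₁ = N − β, ξ₂ = 1 + α(1 + N − β), ξ₃ = α + (α+1)(N − β). -/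
/-- Coefficients of the difference operator `Y`. -/
noncomputable def A1 (α β : ℝ) (N : ℕ) (x : ℝ) : ℝ := (x - α) * (x - (N : ℝ)) * (x + 1 - α)
noncomputable def A2 (α β : ℝ) (N : ℕ) (x : ℝ) : ℝ := x * (x - α) * (x + β - α - (N : ℝ))
noncomputable def A0 (α β : ℝ) (N : ℕ) (x : ℝ) : ℝ :=
  (x - α) * (-2 * x ^ 2 + (2 * α - 1 + 2 * (N : ℝ) - β) * x - (N : ℝ) * (α - 1))

/-- The difference operator `Y`: `(Y f)(x) = A₁(x) f(x+1) + A₂(x) f(x-1) + A₀(x) f(x)`. -/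
noncomputable def Yop (α β : ℝ) (N : ℕ) (f : ℤ → ℝ) (x : ℤ) : ℝ :=
  A1 α β N (x : ℝ) * f (x + 1) + A2 α β N (x : ℝ) * f (x - 1) + A0 α β N (x : ℝ) * f x

theorem statement15_general (N : ℕ) (α β : ℝ) (hα : ∀ m : ℤ, α ≠ (m : ℝ))
    (f : ℤ → ℝ) (x : ℤ) :
    Xop α (Yop α β N f) x - Yop α β N (Xop α f) x =
      ((N : ℝ) - β) * (Xop α (Xop α f) x + Zop α (Zop α f) x)
        + (Xop α (Zop α f) x + Zop α (Xop α f) x)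
        + (Yop α β N (Zop α f) x + Zop α (Yop α β N f) x)
        + (1 + α * (1 + (N : ℝ) - β)) * Xop α f x
        + (α + (α + 1) * ((N : ℝ) - β)) * Zop α f x
        + Yop α β N f x
        + α * (α - β) * f x := by
  have hden (m : ℤ) : (m : ℝ) - α ≠ 0 := sub_ne_zero.mpr (hα m).symm
  -- The only denominators after unfolding are `x - 1 - α`, `x - α` and `x + 1 - α`.
  have hprev := hden (x - 1)
  have hcur := hden x
  have hnext := hden (x + 1)
  push_cast at hprev hnext
  simp only [Xop, Yop, Zop, A0, A1, A2, Int.cast_add, Int.cast_sub, Int.cast_one,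
    add_sub_cancel_right, sub_add_cancel]
  field_simp
  ring

theorem statement15 (N : ℕ) (hN : 0 < N) (α β : ℝ) (hα : ∀ m : ℤ, α ≠ (m : ℝ))
    (f : ℤ → ℝ) (x : ℤ) :
    Xop α (Yop α β N f) x - Yop α β N (Xop α f) x =
      ((N : ℝ) - β) * (Xop α (Xop α f) x + Zop α (Zop α f) x)
        + (Xop α (Zop α f) x + Zop α (Xop α f) x)
        + (Yop α β N (Zop α f) x + Zop α (Yop α β N f) x)
        + (1 + α * (1 + (N : ℝ) - β)) * Xop α f x
        + (α + (α + 1) * ((N : ℝ) - β)) * Zop α f x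
        + Yop α β N f x
        + α * (α - β) * f x :=
  statement15_general N α β hα f x
end

section
/- The operators X, Y, Z satisfy the quadratic relation [Y, Z] = 3X² + Z² + ξ₁{X, Z} + ξ₄ X + ξ₂ Z + ξ₀ I: for every function f : ℤ → ℝ and every integer x, (Y(Z f))(x) − (Z(Y f))(x) = 3(X(X f))(x) + (Z(Z f))(x) + ξ₁((X(Z f))(x) + (Z(X f))(x)) + ξ₄ (X f)(x) + ξ₂ (Z f)(x) + ξ₀ f(x), where ξ₀ = α(α − β), ξ₁ = N − β, ξ₂ = 1 + α(1 + N − β), ξ₄ = 4α − 2β − 1. -/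
theorem statement16_general (N : ℕ) (α β : ℝ) (hα : ∀ m : ℤ, α ≠ (m : ℝ))
    (f : ℤ → ℝ) (x : ℤ) :
    Yop α β N (Zop α f) x - Zop α (Yop α β N f) x =
      3 * Xop α (Xop α f) x + Zop α (Zop α f) x
        + ((N : ℝ) - β) * (Xop α (Zop α f) x + Zop α (Xop α f) x)
        + (4 * α - 2 * β - 1) * Xop α f x
        + (1 + α * (1 + (N : ℝ) - β)) * Zop α f x
        + α * (α - β) * f x := by
  have hx : (x : ℝ) - α ≠ 0 := sub_ne_zero.mpr (hα x).symm
  have hx_succ : (x : ℝ) + 1 - α ≠ 0 := sub_ne_zero.mpr (by exact_mod_cast (hα (x + 1)).symm)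
  have hx_pred : (x : ℝ) - 1 - α ≠ 0 := sub_ne_zero.mpr (by exact_mod_cast (hα (x - 1)).symm)
  simp only [Yop, Zop, Xop, A0, A1, A2, Int.cast_add, Int.cast_sub, Int.cast_one,
    add_sub_cancel_right, sub_add_cancel]
  field_simp
  ring

theorem statement16 (N : ℕ) (hN : 0 < N) (α β : ℝ) (hα : ∀ m : ℤ, α ≠ (m : ℝ))
    (f : ℤ → ℝ) (x : ℤ) :
    Yop α β N (Zop α f) x - Zop α (Yop α β N f) x =
      3 * Xop α (Xop α f) x + Zop α (Zop α f) x
        + ((N : ℝ) - β) * (Xop α (Zop α f) x + Zop α (Xop α f) x)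
        + (4 * α - 2 * β - 1) * Xop α f x
        + (1 + α * (1 + (N : ℝ) - β)) * Zop α f x
        + α * (α - β) * f x :=
  statement16_general N α β hα f x
end

section
/- Centrality of the Casimir element of the quadratic algebra R_H: let A be an associative unital ℝ-algebra, let ξ₀, ξ₁, ξ₂, ξ₃, ξ₄ ∈ ℝ, and let X, Y, Z ∈ A satisfy ZX − XZ = Z² + Z, XY − YX = ξ₁(X² + Z²) + {X, Z} + {Y, Z} + ξ₂ X + ξ₃ Z + Y + ξ₀·1, and YZ − ZY = 3X² + Z² + ξ₁{X, Z} + ξ₄ X + ξ₂ Z + ξ₀·1, where {A, B} = AB + BA. Define Q = X³ + ξ₁ Z³ + (ξ₁/2){X², Z} + 2{X, Z²} + (1/2){Y, Z²} + (ξ₄/2) X² + ((ξ₁ + ξ₃ + ξ₄)/2) Z² + ((ξ₂ + 3)/2){X, Z} + (1/2){Y, Z} + (ξ₀ + 1/2) X + (ξ₀ + ξ₄/2) Z. Then Q commutes with X, Y and Z: QX = XQ, QY = YQ and QZ = ZQ. -/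
/-!
Read the three relations as rewriting rules `Z X ↦ X Z + ⋯`, `Y X ↦ X Y - ⋯`, `Y Z ↦ Z Y + ⋯`
towards the ordering `X < Z < Y`; each one either lowers the degree or removes an inversion, so
both sides of `Q g = g Q` (`g = X, Y, Z`) reduce to linear combinations of ordered monomials, and
these agree coefficient by coefficient, as polynomials in the `ξᵢ`.
-/

namespace QuadraticAlgebraRH

theorem mul_mul_eq_of_mul_eq {M : Type*} [Semigroup M] {a b c : M} (h : a * b = c) (w : M) :
    a * (b * w) = c * w := by
  rw [← mul_assoc, h]

variable {K A : Type*} [Field K] [CharZero K] [Ring A] [Algebra K A]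
  {ξ₀ ξ₁ ξ₂ ξ₃ ξ₄ : K} {X Y Z : A}

def casimir (ξ₀ ξ₁ ξ₂ ξ₃ ξ₄ : K) (X Y Z : A) : A :=
  X ^ 3 + ξ₁ • Z ^ 3 + (ξ₁ / 2) • (X ^ 2 * Z + Z * X ^ 2)
    + (2 : K) • (X * Z ^ 2 + Z ^ 2 * X) + (1 / 2 : K) • (Y * Z ^ 2 + Z ^ 2 * Y)
    + (ξ₄ / 2) • X ^ 2 + ((ξ₁ + ξ₃ + ξ₄) / 2) • Z ^ 2
    + ((ξ₂ + 3) / 2) • (X * Z + Z * X) + (1 / 2 : K) • (Y * Z + Z * Y)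
    + (ξ₀ + 1 / 2) • X + (ξ₀ + ξ₄ / 2) • Z

theorem commute_casimir_x (hzx : Z * X - X * Z = Z ^ 2 + Z)
    (hxy : X * Y - Y * X = ξ₁ • (X ^ 2 + Z ^ 2) + (X * Z + Z * X) + (Y * Z + Z * Y)
      + ξ₂ • X + ξ₃ • Z + Y + ξ₀ • (1 : A))
    (hyz : Y * Z - Z * Y = (3 : K) • X ^ 2 + Z ^ 2 + ξ₁ • (X * Z + Z * X)
      + ξ₄ • X + ξ₂ • Z + ξ₀ • (1 : A)) :
    Commute (casimir ξ₀ ξ₁ ξ₂ ξ₃ ξ₄ X Y Z) X := by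
  have zx := eq_add_of_sub_eq' hzx
  have yx := (sub_eq_iff_comm.mp hxy).symm
  have yz := eq_add_of_sub_eq' hyz
  simp only [Commute, SemiconjBy, casimir, pow_succ, pow_zero, one_mul, mul_one, mul_add,
    add_mul, mul_sub, smul_add, smul_mul_assoc, mul_smul_comm, smul_smul, mul_assoc,
    zx, yx, yz, mul_mul_eq_of_mul_eq zx, mul_mul_eq_of_mul_eq yz]
  module

set_option maxHeartbeats 4000000 in
theorem commute_casimir_y (hzx : Z * X - X * Z = Z ^ 2 + Z)
    (hxy : X * Y - Y * X = ξ₁ • (X ^ 2 + Z ^ 2) + (X * Z + Z * X) + (Y * Z + Z * Y)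
      + ξ₂ • X + ξ₃ • Z + Y + ξ₀ • (1 : A))
    (hyz : Y * Z - Z * Y = (3 : K) • X ^ 2 + Z ^ 2 + ξ₁ • (X * Z + Z * X)
      + ξ₄ • X + ξ₂ • Z + ξ₀ • (1 : A)) :
    Commute (casimir ξ₀ ξ₁ ξ₂ ξ₃ ξ₄ X Y Z) Y := by
  have zx := eq_add_of_sub_eq' hzx
  have yx := (sub_eq_iff_comm.mp hxy).symm
  have yz := eq_add_of_sub_eq' hyz
  simp only [Commute, SemiconjBy, casimir, pow_succ, pow_zero, one_mul, mul_one, mul_add,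
    add_mul, mul_sub, sub_mul, smul_add, smul_mul_assoc, mul_smul_comm, smul_smul, mul_assoc,
    zx, yx, yz, mul_mul_eq_of_mul_eq zx, mul_mul_eq_of_mul_eq yx, mul_mul_eq_of_mul_eq yz]
  module

theorem commute_casimir_z (hzx : Z * X - X * Z = Z ^ 2 + Z)
    (hyz : Y * Z - Z * Y = (3 : K) • X ^ 2 + Z ^ 2 + ξ₁ • (X * Z + Z * X)
      + ξ₄ • X + ξ₂ • Z + ξ₀ • (1 : A)) :
    Commute (casimir ξ₀ ξ₁ ξ₂ ξ₃ ξ₄ X Y Z) Z := by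
  have zx := eq_add_of_sub_eq' hzx
  have yz := eq_add_of_sub_eq' hyz
  simp only [Commute, SemiconjBy, casimir, pow_succ, pow_zero, one_mul, mul_one, mul_add,
    add_mul, smul_add, smul_mul_assoc, mul_smul_comm, smul_smul, mul_assoc,
    zx, yz, mul_mul_eq_of_mul_eq zx, mul_mul_eq_of_mul_eq yz]
  module

end QuadraticAlgebraRH

open QuadraticAlgebraRH in
theorem statement17 (A : Type*) [Ring A] [Algebra ℝ A]
    (ξ₀ ξ₁ ξ₂ ξ₃ ξ₄ : ℝ) (X Y Z : A)
    (h1 : Z * X - X * Z = Z ^ 2 + Z)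
    (h2 : X * Y - Y * X =
      ξ₁ • (X ^ 2 + Z ^ 2) + (X * Z + Z * X) + (Y * Z + Z * Y)
        + ξ₂ • X + ξ₃ • Z + Y + ξ₀ • (1 : A))
    (h3 : Y * Z - Z * Y =
      (3 : ℝ) • X ^ 2 + Z ^ 2 + ξ₁ • (X * Z + Z * X)
        + ξ₄ • X + ξ₂ • Z + ξ₀ • (1 : A))
    (Q : A)
    (hQ : Q = X ^ 3 + ξ₁ • Z ^ 3 + (ξ₁ / 2) • (X ^ 2 * Z + Z * X ^ 2)
      + (2 : ℝ) • (X * Z ^ 2 + Z ^ 2 * X) + (1 / 2 : ℝ) • (Y * Z ^ 2 + Z ^ 2 * Y)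
      + (ξ₄ / 2) • X ^ 2 + ((ξ₁ + ξ₃ + ξ₄) / 2) • Z ^ 2
      + ((ξ₂ + 3) / 2) • (X * Z + Z * X) + (1 / 2 : ℝ) • (Y * Z + Z * Y)
      + (ξ₀ + 1 / 2) • X + (ξ₀ + ξ₄ / 2) • Z) :
    Q * X = X * Q ∧ Q * Y = Y * Q ∧ Q * Z = Z * Q := by
  obtain rfl : Q = casimir ξ₀ ξ₁ ξ₂ ξ₃ ξ₄ X Y Z := hQ
  exact ⟨(commute_casimir_x h1 h2 h3).eq, (commute_casimir_y h1 h2 h3).eq,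
    (commute_casimir_z h1 h3).eq⟩
end
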